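/- For every real number x > 0, (2Φ(x) − 1)(x² − 3) + 6xφ(x) > 0. -/

import Mathlib

open Real Set MeasureTheory

/-- The standard normal probability density function. -/
noncomputable def phi (x : ℝ) : ℝ := (Real.sqrt (2 * Real.pi))⁻¹ * Real.exp (-x ^ 2 / 2)

/-- The standard normal cumulative distribution function. -/
noncomputable def Phi (x : ℝ) : ℝ := ∫ r in Set.Iic x, phi r

lemma phi_pos (x : ℝ) : 0 < phi x := by
  have h : 0 < Real.sqrt (2 * Real.pi) := Real.sqrt_pos.2 (by positivity)
  exact mul_pos (inv_pos.2 h) (Real.exp_pos _)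

lemma phi_cont : Continuous phi := by
  unfold phi; fun_prop

lemma phi_integrable : Integrable phi := by
  have h := (integrable_exp_neg_mul_sq (by norm_num : (0:ℝ) < 1/2)).const_mul
    (Real.sqrt (2 * Real.pi))⁻¹
  convert h using 2 with x
  unfold phi
  ring_nf

lemma hasDerivAt_phi (x : ℝ) : HasDerivAt phi (-x * phi x) x := by
  have h1 : HasDerivAt (fun y : ℝ => -y ^ 2 / 2) (-x) x := by
    have h := ((hasDerivAt_pow 2 x).neg).div_const 2
    refine h.congr_deriv ?_
    simp; ring
  have h2 := (h1.exp).const_mul (Real.sqrt (2 * Real.pi))⁻¹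
  refine h2.congr_deriv ?_
  unfold phi; ring

lemma integral_phi : ∫ x, phi x = 1 := by
  have h : ∫ x : ℝ, Real.exp (-(1/2) * x ^ 2) = Real.sqrt (Real.pi / (1/2)) :=
    integral_gaussian (1/2)
  have h2 : ∫ x, phi x = (Real.sqrt (2 * Real.pi))⁻¹ * ∫ x : ℝ, Real.exp (-(1/2) * x ^ 2) := by
    rw [← integral_const_mul]
    congr 1 with x
    unfold phi; ring_nf
  rw [h2, h]
  have : Real.pi / (1/2) = 2 * Real.pi := by ring
  rw [this]
  have hpos : Real.sqrt (2 * Real.pi) ≠ 0 := ne_of_gt (Real.sqrt_pos.2 (by positivity))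
  field_simp

lemma Phi_zero : Phi 0 = 1 / 2 := by
  have heven : ∀ x : ℝ, phi (-x) = phi x := by
    intro x; unfold phi; rw [neg_pow]; norm_num
  have h1 : Phi 0 = ∫ x in Ioi (0:ℝ), phi x := by
    unfold Phi
    rw [show (0:ℝ) = -0 by norm_num] at *
    rw [← integral_comp_neg_Iic (0:ℝ) phi]
    simp only [neg_zero]
    exact setIntegral_congr_fun measurableSet_Iic fun x _ => (heven x).symm
  have h2 : Phi 0 + ∫ x in Ioi (0:ℝ), phi x = 1 := by
    unfold Phi
    rw [← setIntegral_union (Iic_disjoint_Ioi le_rfl) measurableSet_Ioi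
      phi_integrable.integrableOn phi_integrable.integrableOn, Iic_union_Ioi,
      Measure.restrict_univ, integral_phi]
  linarith [h1, h2]

lemma hasDerivAt_Phi (x : ℝ) : HasDerivAt Phi (phi x) x := by
  have hfun : Phi = fun y => Phi 0 + ∫ t in (0:ℝ)..y, phi t := by
    funext y
    rw [← intervalIntegral.integral_Iic_sub_Iic phi_integrable.integrableOn
      phi_integrable.integrableOn]
    unfold Phi
    ring
  rw [hfun]
  exact (intervalIntegral.integral_hasDerivAt_right
    (phi_integrable.intervalIntegrable)
    (phi_cont.stronglyMeasurableAtFilter _ _) phi_cont.continuousAt).const_add (Phi 0)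

lemma hasDerivAt_g (x : ℝ) :
    HasDerivAt (fun y => (2 * Phi y - 1) - 2 * y * phi y) (2 * x ^ 2 * phi x) x := by
  have h1 : HasDerivAt (fun y => 2 * Phi y - 1) (2 * phi x) x :=
    ((hasDerivAt_Phi x).const_mul 2).sub_const 1
  have h2 : HasDerivAt (fun y : ℝ => 2 * y * phi y)
      (2 * phi x + 2 * x * (-x * phi x)) x := by
    have := ((hasDerivAt_id x).const_mul 2).mul (hasDerivAt_phi x)
    refine this.congr_deriv ?_
    simp [id]
  have := h1.sub h2
  refine this.congr_deriv ?_
  ring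

lemma g_pos {x : ℝ} (hx : 0 < x) : 0 < (2 * Phi x - 1) - 2 * x * phi x := by
  set g : ℝ → ℝ := fun y => (2 * Phi y - 1) - 2 * y * phi y with hg
  have hmono : StrictMonoOn g (Ici 0) := by
    apply strictMonoOn_of_deriv_pos (convex_Ici 0)
    · exact fun y _ => ((hasDerivAt_g y).differentiableAt).continuousAt.continuousWithinAt
    · intro y hy
      rw [interior_Ici] at hy
      rw [(hasDerivAt_g y).deriv]
      nlinarith [pow_pos (mem_Ioi.mp hy) 2, phi_pos y, mul_pos (pow_pos (mem_Ioi.mp hy) 2) (phi_pos y)]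
  have h0 : g 0 = 0 := by
    simp [hg, Phi_zero]
  have := hmono (self_mem_Ici) (le_of_lt hx : (0:ℝ) ≤ x) hx
  rw [h0] at this
  exact this

lemma hasDerivAt_F (x : ℝ) :
    HasDerivAt (fun y => (2 * Phi y - 1) * (y ^ 2 - 3) + 6 * y * phi y)
      (2 * x * ((2 * Phi x - 1) - 2 * x * phi x)) x := by
  have h1 : HasDerivAt (fun y => 2 * Phi y - 1) (2 * phi x) x :=
    ((hasDerivAt_Phi x).const_mul 2).sub_const 1
  have h2 : HasDerivAt (fun y : ℝ => y ^ 2 - 3) (2 * x) x := by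
    have := (hasDerivAt_pow 2 x).sub_const 3
    simpa using this
  have h3 : HasDerivAt (fun y : ℝ => 6 * y * phi y)
      (6 * phi x + 6 * x * (-x * phi x)) x := by
    have := ((hasDerivAt_id x).const_mul 6).mul (hasDerivAt_phi x)
    refine this.congr_deriv ?_
    simp [id]
  have := (h1.mul h2).add h3
  refine this.congr_deriv ?_
  ring

theorem key_positivity : ∀ x : ℝ, 0 < x →
    0 < (2 * Phi x - 1) * (x ^ 2 - 3) + 6 * x * phi x := by
  intro x hx
  set F : ℝ → ℝ := fun y => (2 * Phi y - 1) * (y ^ 2 - 3) + 6 * y * phi y with hF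
  have hmono : StrictMonoOn F (Ici 0) := by
    apply strictMonoOn_of_deriv_pos (convex_Ici 0)
    · exact fun y _ => ((hasDerivAt_F y).differentiableAt).continuousAt.continuousWithinAt
    · intro y hy
      rw [interior_Ici] at hy
      rw [(hasDerivAt_F y).deriv]
      have hy' : 0 < y := hy
      exact mul_pos (by linarith) (g_pos hy')
  have h0 : F 0 = 0 := by
    simp [hF, Phi_zero]
  have := hmono (self_mem_Ici) (le_of_lt hx : (0:ℝ) ≤ x) hx
  rw [h0] at this
  exact this
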